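/- arXiv:1212.5661 — 3 statements merged into one kernel-verified Lean document; each statement's English description precedes it below -/
import Mathlib

section
/- Let S and T be nonnegative self-adjoint operators in a Hilbert space H with dom(T^{1/2}) ⊆ dom(S^{1/2}). Suppose there exist constants M₁ > 0, E₀ ≥ 1, and β₁ ∈ (0, 1/2) such that ‖S^{1/2}(T + E I)^{-1/2}‖ ≤ M₁ E^{-β₁} for all E ≥ E₀. Then for all f ∈ dom(T^{1/2}) and all ε with 0 < ε < M₁ E₀^{-β₁}, one has ‖S^{1/2} f‖ ≤ ε ‖T^{1/2} f‖ + M₁^{1/(2β₁)} ε^{(2β₁−1)/(2β₁)} ‖f‖. In particular S is infinitesimally form bounded with respect to T. -/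
/-- Let `S` and `T` be nonnegative self-adjoint operators in a Hilbert space `H` with
`dom(T^{1/2}) ⊆ dom(S^{1/2})`.  Here `domT` is `dom(T^{1/2})`, `sqrtS`, `sqrtT` are the
square roots `S^{1/2}`, `T^{1/2}`, and `sqrtTE E` is `(T + E I)^{1/2}`; the spectral
theorem gives `‖(T+E)^{1/2} f‖² = ‖T^{1/2} f‖² + E ‖f‖²` (hypothesis `hpyth`), and the
operator-norm bound `‖S^{1/2}(T + E I)^{-1/2}‖ ≤ M₁ E^{-β₁}` for `E ≥ E₀` is expressed as
`‖S^{1/2} f‖ ≤ M₁ E^{-β₁} ‖(T+E)^{1/2} f‖` for `f ∈ dom(T^{1/2})` (hypothesis `hbound`).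
Then for all `f ∈ dom(T^{1/2})` and all `0 < ε < M₁ E₀^{-β₁}`,
`‖S^{1/2} f‖ ≤ ε ‖T^{1/2} f‖ + M₁^{1/(2β₁)} ε^{(2β₁-1)/(2β₁)} ‖f‖`;
in particular, `S` is infinitesimally form bounded with respect to `T`. -/
theorem stmt_3 {H : Type*} [NormedAddCommGroup H] [InnerProductSpace ℂ H]
    (domT : Set H) (sqrtS sqrtT : H → H) (sqrtTE : ℝ → H → H)
    (M₁ E₀ β₁ : ℝ) (hM₁ : 0 < M₁) (hE₀ : 1 ≤ E₀) (hβ₁ : 0 < β₁) (hβ₁' : β₁ < 1 / 2)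
    (hpyth : ∀ E : ℝ, 0 < E → ∀ f ∈ domT,
      ‖sqrtTE E f‖ ^ 2 = ‖sqrtT f‖ ^ 2 + E * ‖f‖ ^ 2)
    (hbound : ∀ E : ℝ, E₀ ≤ E → ∀ f ∈ domT,
      ‖sqrtS f‖ ≤ M₁ * E ^ (-β₁) * ‖sqrtTE E f‖) :
    ∀ f ∈ domT, ∀ ε : ℝ, 0 < ε → ε < M₁ * E₀ ^ (-β₁) →
      ‖sqrtS f‖ ≤ ε * ‖sqrtT f‖ +
        M₁ ^ (1 / (2 * β₁)) * ε ^ ((2 * β₁ - 1) / (2 * β₁)) * ‖f‖ := by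
  intro f hf ε hε hε'
  have hE₀pos : (0:ℝ) < E₀ := lt_of_lt_of_le one_pos hE₀
  set E : ℝ := (M₁ / ε) ^ (β₁⁻¹) with hEdef
  have hMε : (0:ℝ) < M₁ / ε := div_pos hM₁ hε
  have hEpos : 0 < E := Real.rpow_pos_of_pos hMε _
  -- E₀ ≤ E
  have hstep : E₀ ^ β₁ < M₁ / ε := by
    have h1 : ε * E₀ ^ β₁ < M₁ := by
      have h0 := hε'
      rw [Real.rpow_neg hE₀pos.le] at h0
      have h2 : ε * E₀ ^ β₁ < M₁ * (E₀ ^ β₁)⁻¹ * E₀ ^ β₁ :=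
        mul_lt_mul_of_pos_right h0 (Real.rpow_pos_of_pos hE₀pos _)
      calc ε * E₀ ^ β₁ < M₁ * (E₀ ^ β₁)⁻¹ * E₀ ^ β₁ := h2
        _ = M₁ := by field_simp
    exact (lt_div_iff₀ hε).mpr (by linarith [h1])
  have hE₀E : E₀ ≤ E := by
    have h : (E₀ ^ β₁) ^ (β₁⁻¹) ≤ (M₁ / ε) ^ (β₁⁻¹) :=
      Real.rpow_le_rpow (Real.rpow_pos_of_pos hE₀pos _).le hstep.le (by positivity)
    rwa [← Real.rpow_mul hE₀pos.le, mul_inv_cancel₀ hβ₁.ne', Real.rpow_one] at h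
  -- M₁ * E ^ (-β₁) = ε
  have hkey : M₁ * E ^ (-β₁) = ε := by
    have hexp : β₁⁻¹ * -β₁ = -1 := by field_simp
    rw [hEdef, ← Real.rpow_mul hMε.le, hexp, Real.rpow_neg_one]
    field_simp
  have hb : ‖sqrtS f‖ ≤ ε * ‖sqrtTE E f‖ := by
    have := hbound E hE₀E f hf
    rwa [hkey] at this
  -- sqrt inequality
  have hsq : Real.sqrt E ^ 2 = E := Real.sq_sqrt hEpos.le
  have htri : ‖sqrtTE E f‖ ≤ ‖sqrtT f‖ + Real.sqrt E * ‖f‖ := by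
    have h2 : ‖sqrtTE E f‖ ^ 2 ≤ (‖sqrtT f‖ + Real.sqrt E * ‖f‖) ^ 2 := by
      rw [hpyth E hEpos f hf]
      nlinarith [norm_nonneg f, norm_nonneg (sqrtT f), Real.sqrt_nonneg E,
        mul_nonneg (Real.sqrt_nonneg E) (norm_nonneg f)]
    have := Real.sqrt_le_sqrt h2
    rwa [Real.sqrt_sq (norm_nonneg _),
      Real.sqrt_sq (by positivity)] at this
  -- ε * √E = M₁ ^ (1/(2β₁)) * ε ^ ((2β₁-1)/(2β₁))
  have hεE : ε * Real.sqrt E = M₁ ^ (1 / (2 * β₁)) * ε ^ ((2 * β₁ - 1) / (2 * β₁)) := by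
    have hroot : Real.sqrt E = (M₁ / ε) ^ (1 / (2 * β₁)) := by
      rw [Real.sqrt_eq_rpow, hEdef, ← Real.rpow_mul hMε.le]
      congr 1
      field_simp
    rw [hroot, Real.div_rpow hM₁.le hε.le]
    rw [div_eq_mul_inv, ← Real.rpow_neg hε.le]
    have : ε * (M₁ ^ (1 / (2 * β₁)) * ε ^ (-(1 / (2 * β₁))))
        = M₁ ^ (1 / (2 * β₁)) * (ε ^ (1:ℝ) * ε ^ (-(1 / (2 * β₁)))) := by
      rw [Real.rpow_one]; ring
    rw [this, ← Real.rpow_add hε]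
    congr 1
    field_simp
    ring_nf
  calc ‖sqrtS f‖ ≤ ε * ‖sqrtTE E f‖ := hb
    _ ≤ ε * (‖sqrtT f‖ + Real.sqrt E * ‖f‖) := by
        exact mul_le_mul_of_nonneg_left htri hε.le
    _ = ε * ‖sqrtT f‖ + (ε * Real.sqrt E) * ‖f‖ := by ring
    _ = ε * ‖sqrtT f‖ + M₁ ^ (1 / (2 * β₁)) * ε ^ ((2 * β₁ - 1) / (2 * β₁)) * ‖f‖ := by
        rw [hεE]
end

section
/- Let S and T be nonnegative self-adjoint operators in a Hilbert space H. Suppose there exist constants M₂ > 0, ε₀ > 0, and β₂ > 0 such that ‖S^{1/2} f‖ ≤ ε ‖T^{1/2} f‖ + M₂ ε^{-β₂} ‖f‖ for all 0 < ε < ε₀ and all f ∈ dom(T^{1/2}). Then for every α with 0 < α(1 + β₂) < 1/2 there exist constants M₁ > 0 and E₀ ≥ 1 such that ‖S^{1/2}(T + E I)^{-1/2}‖ ≤ M₁ E^{-α} for all E ≥ E₀. -/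
/-- Let `S` and `T` be nonnegative self-adjoint operators in a Hilbert space `H` with
`dom(T^{1/2}) ⊆ dom(S^{1/2})`.  Here `domT = dom(T^{1/2})`, `sqrtS`, `sqrtT` are the square
roots, and `invSqrtTE E = (T + E I)^{-1/2}`, which maps into `dom(T^{1/2})` and satisfies
the functional-calculus bounds `‖T^{1/2}(T + E I)^{-1/2}‖ ≤ 1` and
`‖(T + E I)^{-1/2}‖ ≤ E^{-1/2}` (hypotheses `hmem`, `hT1`, `hT2`).  If
`‖S^{1/2} f‖ ≤ ε ‖T^{1/2} f‖ + M₂ ε^{-β₂} ‖f‖` for all `0 < ε < ε₀` and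
`f ∈ dom(T^{1/2})`, then for every `α` with `0 < α (1 + β₂) < 1/2` there are `M₁ > 0` and
`E₀ ≥ 1` with `‖S^{1/2}(T + E I)^{-1/2}‖ ≤ M₁ E^{-α}` for all `E ≥ E₀`. -/
theorem stmt_4 {H : Type*} [NormedAddCommGroup H] [InnerProductSpace ℂ H]
    (domT : Set H) (sqrtS sqrtT : H → H) (invSqrtTE : ℝ → H → H)
    (hmem : ∀ E : ℝ, 0 < E → ∀ g : H, invSqrtTE E g ∈ domT)
    (hT1 : ∀ E : ℝ, 0 < E → ∀ g : H, ‖sqrtT (invSqrtTE E g)‖ ≤ ‖g‖)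
    (hT2 : ∀ E : ℝ, 0 < E → ∀ g : H, ‖invSqrtTE E g‖ ≤ E ^ (-(1 / 2 : ℝ)) * ‖g‖)
    (M₂ ε₀ β₂ : ℝ) (hM₂ : 0 < M₂) (hε₀ : 0 < ε₀) (hβ₂ : 0 < β₂)
    (hbound : ∀ ε : ℝ, 0 < ε → ε < ε₀ → ∀ f ∈ domT,
      ‖sqrtS f‖ ≤ ε * ‖sqrtT f‖ + M₂ * ε ^ (-β₂) * ‖f‖) :
    ∀ α : ℝ, 0 < α → α * (1 + β₂) < 1 / 2 →
      ∃ M₁ : ℝ, 0 < M₁ ∧ ∃ E₀ : ℝ, 1 ≤ E₀ ∧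
        ∀ E : ℝ, E₀ ≤ E → ∀ g : H,
          ‖sqrtS (invSqrtTE E g)‖ ≤ M₁ * E ^ (-α) * ‖g‖ := by
  intro α hα hα2
  refine ⟨1 + M₂, by linarith, max 1 ((2 / ε₀) ^ (1 / α)), le_max_left _ _, ?_⟩
  intro E hE g
  have hE1 : (1 : ℝ) ≤ E := le_trans (le_max_left _ _) hE
  have hEpos : (0 : ℝ) < E := lt_of_lt_of_le one_pos hE1
  set ε : ℝ := E ^ (-α) with hεdef
  have hεpos : 0 < ε := Real.rpow_pos_of_pos hEpos _
  have hεlt : ε < ε₀ := by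
    have h2 : (2 / ε₀ : ℝ) ^ (1 / α) ≤ E := le_trans (le_max_right _ _) hE
    have hEα : 2 / ε₀ ≤ E ^ α := by
      calc 2 / ε₀ = ((2 / ε₀) ^ (1 / α)) ^ α := by
            rw [one_div, Real.rpow_inv_rpow (by positivity) (ne_of_gt hα)]
        _ ≤ E ^ α := Real.rpow_le_rpow (by positivity) h2 hα.le
    have hEαpos : 0 < E ^ α := Real.rpow_pos_of_pos hEpos _
    have : ε = (E ^ α)⁻¹ := by rw [hεdef, Real.rpow_neg hEpos.le]
    rw [this]
    have h2' : 2 / ε₀ ≤ E ^ α := hEα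
    have : (E ^ α)⁻¹ ≤ ε₀ / 2 := by
      rw [inv_le_comm₀ hEαpos (by positivity), inv_div]
      exact hEα
    linarith
  have key := hbound ε hεpos hεlt (invSqrtTE E g) (hmem E hEpos g)
  have h1 : ε * ‖sqrtT (invSqrtTE E g)‖ ≤ ε * ‖g‖ :=
    mul_le_mul_of_nonneg_left (hT1 E hEpos g) hεpos.le
  have h2 : M₂ * ε ^ (-β₂) * ‖invSqrtTE E g‖ ≤ M₂ * ε ^ (-β₂) * (E ^ (-(1/2 : ℝ)) * ‖g‖) := by
    apply mul_le_mul_of_nonneg_left (hT2 E hEpos g)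
    positivity
  have hεβ : ε ^ (-β₂) = E ^ (α * β₂) := by
    rw [hεdef, ← Real.rpow_mul hEpos.le]
    ring_nf
  have hmul : E ^ (α * β₂) * E ^ (-(1/2 : ℝ)) = E ^ (α * β₂ - 1/2) := by
    rw [← Real.rpow_add hEpos]
    ring_nf
  have hexp : E ^ (α * β₂ - 1/2 : ℝ) ≤ E ^ (-α) :=
    Real.rpow_le_rpow_of_exponent_le hE1 (by nlinarith)
  have hg : (0:ℝ) ≤ ‖g‖ := norm_nonneg g
  calc ‖sqrtS (invSqrtTE E g)‖ ≤ ε * ‖sqrtT (invSqrtTE E g)‖ + M₂ * ε ^ (-β₂) * ‖invSqrtTE E g‖ := key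
    _ ≤ ε * ‖g‖ + M₂ * ε ^ (-β₂) * (E ^ (-(1/2 : ℝ)) * ‖g‖) := add_le_add h1 h2
    _ = E ^ (-α) * ‖g‖ + M₂ * (E ^ (α * β₂ - 1/2)) * ‖g‖ := by
        rw [hεβ, ← hmul]; ring
    _ ≤ E ^ (-α) * ‖g‖ + M₂ * E ^ (-α) * ‖g‖ := by
        have := mul_le_mul_of_nonneg_left hexp hM₂.le
        nlinarith
    _ = (1 + M₂) * E ^ (-α) * ‖g‖ := by ring
end

section
/- Let T₁ and T₂ be nonnegative self-adjoint operators in a Hilbert space H with dom(T₁^{1/2}) = dom(T₂^{1/2}), and let S be a densely defined closed linear operator in H with dom(T₁^{1/2}) ⊆ dom(S). Then there exist constants 0 < c ≤ C < ∞ such that c ‖S(T₁ + E I)^{-1/2}‖ ≤ ‖S(T₂ + E I)^{-1/2}‖ ≤ C ‖S(T₁ + E I)^{-1/2}‖ for all E ≥ 1. -/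
lemma key_comp {H : Type*} [NormedAddCommGroup H] [InnerProductSpace ℂ H]
    [CompleteSpace H]
    (D : Submodule ℂ H)
    (sqrt1 sqrt2 : D →ₗ[ℂ] H)
    (R1 R2 : ℝ → H →L[ℂ] H)
    (hR1mem : ∀ (E : ℝ) (g : H), R1 E g ∈ D)
    (hR2mem : ∀ (E : ℝ) (g : H), R2 E g ∈ D)
    (hR1iso : ∀ E : ℝ, 0 < E → ∀ g : H,
      ‖sqrt1 ⟨R1 E g, hR1mem E g⟩‖ ^ 2 + E * ‖R1 E g‖ ^ 2 = ‖g‖ ^ 2)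
    (hR2iso : ∀ E : ℝ, 0 < E → ∀ g : H,
      ‖sqrt2 ⟨R2 E g, hR2mem E g⟩‖ ^ 2 + E * ‖R2 E g‖ ^ 2 = ‖g‖ ^ 2)
    (hR1surj : ∀ E : ℝ, 0 < E → ∀ f : D, ∃ g : H, R1 E g = (f : H))
    (hR2surj : ∀ E : ℝ, 0 < E → ∀ f : D, ∃ g : H, R2 E g = (f : H)) :
    ∃ M : ℝ, 1 ≤ M ∧ ∀ E : ℝ, 1 ≤ E → ∀ g h : H, R1 E h = R2 E g → ‖h‖ ≤ M * ‖g‖ := by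
  have iso1 : ∀ E : ℝ, 0 < E → ∀ (h : H) (f : D), R1 E h = (f : H) →
      ‖sqrt1 f‖ ^ 2 + E * ‖(f : H)‖ ^ 2 = ‖h‖ ^ 2 := by
    intro E hE h f hf
    have key := hR1iso E hE h
    have hfe : (⟨R1 E h, hR1mem E h⟩ : D) = f := Subtype.ext hf
    rw [hfe, hf] at key
    exact key
  have iso2 : ∀ E : ℝ, 0 < E → ∀ (g : H) (f : D), R2 E g = (f : H) →
      ‖sqrt2 f‖ ^ 2 + E * ‖(f : H)‖ ^ 2 = ‖g‖ ^ 2 := by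
    intro E hE g f hf
    have key := hR2iso E hE g
    have hfe : (⟨R2 E g, hR2mem E g⟩ : D) = f := Subtype.ext hf
    rw [hfe, hf] at key
    exact key
  -- injectivity of R1 1
  have inj1 : ∀ h h' : H, R1 1 h = R1 1 h' → h = h' := by
    have inj0 : ∀ h : H, R1 1 h = 0 → h = 0 := by
      intro h h0
      have key := iso1 1 one_pos h 0 (by simpa using h0)
      simp only [map_zero, norm_zero, Submodule.coe_zero] at key
      have : ‖h‖ ^ 2 = 0 := by linarith
      simpa using pow_eq_zero_iff (n := 2) (by norm_num) |>.mp this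
    intro h h' he
    have : R1 1 (h - h') = 0 := by rw [map_sub, he, sub_self]
    exact sub_eq_zero.mp (inj0 _ this)
  -- the comparison map Φ : g ↦ h with R1 1 h = R2 1 g
  classical
  have hex : ∀ g : H, ∃ h : H, R1 1 h = R2 1 g := fun g =>
    hR1surj 1 one_pos ⟨R2 1 g, hR2mem 1 g⟩
  choose φ hφspec using hex
  have hφadd : ∀ g g' : H, φ (g + g') = φ g + φ g' := by
    intro g g'
    apply inj1
    rw [map_add, hφspec, hφspec, hφspec, map_add]
  have hφsmul : ∀ (c : ℂ) (g : H), φ (c • g) = c • φ g := by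
    intro c g
    apply inj1
    rw [map_smul, hφspec, hφspec, map_smul]
  set Φ : H →ₗ[ℂ] H := { toFun := φ, map_add' := hφadd, map_smul' := hφsmul } with hΦ
  have hΦg : IsClosed (Φ.graph : Set (H × H)) := by
    have hset : (Φ.graph : Set (H × H)) = {p : H × H | R1 1 p.2 - R2 1 p.1 = 0} := by
      ext p
      simp only [SetLike.mem_coe, LinearMap.mem_graph_iff, Set.mem_setOf_eq, sub_eq_zero]
      constructor
      · intro hp; rw [hp]; exact hφspec p.1
      · intro hp; exact inj1 _ _ (hp.trans (hφspec p.1).symm)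
    rw [hset]
    exact isClosed_eq
      (((R1 1).continuous.comp continuous_snd).sub ((R2 1).continuous.comp continuous_fst))
      continuous_const
  have hΦc : Continuous Φ := Φ.continuous_of_isClosed_graph hΦg
  obtain ⟨A, hA0, hAb⟩ := SemilinearMapClass.bound_of_continuous Φ hΦc
  set M : ℝ := max A 1 with hM
  refine ⟨M, le_max_right _ _, ?_⟩
  intro E hE g h hgh
  set f : D := ⟨R2 E g, hR2mem E g⟩ with hf
  have e1 : ‖sqrt1 f‖ ^ 2 + E * ‖(f : H)‖ ^ 2 = ‖h‖ ^ 2 := iso1 E (by linarith) h f hgh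
  have e2 : ‖sqrt2 f‖ ^ 2 + E * ‖(f : H)‖ ^ 2 = ‖g‖ ^ 2 := iso2 E (by linarith) g f rfl
  obtain ⟨g₁, hg₁⟩ := hR2surj 1 one_pos f
  have e3 : ‖sqrt1 f‖ ^ 2 + 1 * ‖(f : H)‖ ^ 2 = ‖φ g₁‖ ^ 2 :=
    iso1 1 one_pos (φ g₁) f (by rw [hφspec, hg₁])
  have e4 : ‖sqrt2 f‖ ^ 2 + 1 * ‖(f : H)‖ ^ 2 = ‖g₁‖ ^ 2 := iso2 1 one_pos g₁ f hg₁
  have hb : ‖φ g₁‖ ≤ A * ‖g₁‖ := hAb g₁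
  have hA1 : A ≤ M := le_max_left _ _
  have h1M : 1 ≤ M := le_max_right _ _
  have hb2 : ‖φ g₁‖ ^ 2 ≤ M ^ 2 * ‖g₁‖ ^ 2 := by
    have h1 : ‖φ g₁‖ ^ 2 ≤ (A * ‖g₁‖) ^ 2 := pow_le_pow_left₀ (norm_nonneg _) hb 2
    have h2 : A ^ 2 ≤ M ^ 2 := pow_le_pow_left₀ hA0.le hA1 2
    nlinarith [sq_nonneg ‖g₁‖]
  have hb3 : ‖φ g₁‖ ^ 2 ≤ M ^ 2 * (‖sqrt2 f‖ ^ 2 + 1 * ‖(f : H)‖ ^ 2) := by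
    rw [e4]; exact hb2
  have hM2 : 1 ≤ M ^ 2 := by nlinarith
  have haux : 0 ≤ (M ^ 2 - 1) * ((E - 1) * ‖(f : H)‖ ^ 2) :=
    mul_nonneg (by linarith) (mul_nonneg (by linarith) (sq_nonneg _))
  have key : ‖h‖ ^ 2 ≤ M ^ 2 * ‖g‖ ^ 2 := by
    rw [← e1, ← e2]
    nlinarith [hb3, haux, e3]
  have hn : 0 ≤ M * ‖g‖ := mul_nonneg (by linarith) (norm_nonneg g)
  calc ‖h‖ = Real.sqrt (‖h‖ ^ 2) := (Real.sqrt_sq (norm_nonneg h)).symm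
    _ ≤ Real.sqrt (M ^ 2 * ‖g‖ ^ 2) := Real.sqrt_le_sqrt key
    _ = M * ‖g‖ := by
        rw [show M ^ 2 * ‖g‖ ^ 2 = (M * ‖g‖) ^ 2 by ring, Real.sqrt_sq hn]

/-- Let `T₁`, `T₂` be nonnegative self-adjoint operators in a Hilbert space `H` with
`dom(T₁^{1/2}) = dom(T₂^{1/2}) = D`, and let `S` be a densely defined closed linear
operator with `D ⊆ dom(S)`.  For `j = 1,2`, `Rⱼ E = (Tⱼ + E I)^{-1/2}`, a bounded operator
mapping onto `D`, with the spectral identity `‖Tⱼ^{1/2}(Rⱼ E g)‖² + E ‖Rⱼ E g‖² = ‖g‖²`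
(i.e. `‖(Tⱼ+E)^{1/2}(Tⱼ+E)^{-1/2} g‖ = ‖g‖`).  Then there are constants `0 < c ≤ C < ∞`
such that `c ‖S (T₁+E I)^{-1/2}‖ ≤ ‖S (T₂+E I)^{-1/2}‖ ≤ C ‖S (T₁+E I)^{-1/2}‖` for all
`E ≥ 1`; the norm inequalities are expressed through arbitrary bounds `K` on the
operators. -/
theorem stmt_6 {H : Type*} [NormedAddCommGroup H] [InnerProductSpace ℂ H]
    [CompleteSpace H]
    (D Sdom : Submodule ℂ H) (hdense : Dense (Sdom : Set H))
    (S : Sdom →ₗ[ℂ] H)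
    (hSclosed : IsClosed {p : H × H | ∃ x : Sdom, (x : H) = p.1 ∧ S x = p.2})
    (hDS : D ≤ Sdom)
    (sqrt1 sqrt2 : D →ₗ[ℂ] H)
    (R1 R2 : ℝ → H →L[ℂ] H)
    (hR1mem : ∀ (E : ℝ) (g : H), R1 E g ∈ D)
    (hR2mem : ∀ (E : ℝ) (g : H), R2 E g ∈ D)
    (hR1iso : ∀ E : ℝ, 0 < E → ∀ g : H,
      ‖sqrt1 ⟨R1 E g, hR1mem E g⟩‖ ^ 2 + E * ‖R1 E g‖ ^ 2 = ‖g‖ ^ 2)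
    (hR2iso : ∀ E : ℝ, 0 < E → ∀ g : H,
      ‖sqrt2 ⟨R2 E g, hR2mem E g⟩‖ ^ 2 + E * ‖R2 E g‖ ^ 2 = ‖g‖ ^ 2)
    (hR1surj : ∀ E : ℝ, 0 < E → ∀ f : D, ∃ g : H, R1 E g = (f : H))
    (hR2surj : ∀ E : ℝ, 0 < E → ∀ f : D, ∃ g : H, R2 E g = (f : H)) :
    ∃ c C : ℝ, 0 < c ∧ c ≤ C ∧
      ∀ E : ℝ, 1 ≤ E → ∀ K : ℝ, 0 ≤ K →
        ((∀ g : H, ‖S ⟨R1 E g, hDS (hR1mem E g)⟩‖ ≤ K * ‖g‖) →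
          ∀ g : H, ‖S ⟨R2 E g, hDS (hR2mem E g)⟩‖ ≤ C * K * ‖g‖) ∧
        ((∀ g : H, ‖S ⟨R2 E g, hDS (hR2mem E g)⟩‖ ≤ K * ‖g‖) →
          ∀ g : H, ‖S ⟨R1 E g, hDS (hR1mem E g)⟩‖ ≤ c⁻¹ * K * ‖g‖) := by
  obtain ⟨M1, hM1, hb1⟩ := key_comp D sqrt1 sqrt2 R1 R2 hR1mem hR2mem hR1iso hR2iso hR1surj hR2surj
  obtain ⟨M2, hM2, hb2⟩ := key_comp D sqrt2 sqrt1 R2 R1 hR2mem hR1mem hR2iso hR1iso hR2surj hR1surj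
  refine ⟨M2⁻¹, M1, inv_pos.mpr (by linarith), ?_, ?_⟩
  · calc M2⁻¹ ≤ 1 := inv_le_one_of_one_le₀ hM2
      _ ≤ M1 := hM1
  intro E hE K hK
  constructor
  · intro hS g
    obtain ⟨h, hh⟩ := hR1surj E (by linarith) ⟨R2 E g, hR2mem E g⟩
    have heq : (⟨R2 E g, hDS (hR2mem E g)⟩ : Sdom) = ⟨R1 E h, hDS (hR1mem E h)⟩ :=
      Subtype.ext hh.symm
    rw [heq]
    calc ‖S ⟨R1 E h, hDS (hR1mem E h)⟩‖ ≤ K * ‖h‖ := hS h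
      _ ≤ K * (M1 * ‖g‖) := by
          have := hb1 E hE g h hh
          exact mul_le_mul_of_nonneg_left this hK
      _ = M1 * K * ‖g‖ := by ring
  · intro hS g
    obtain ⟨h, hh⟩ := hR2surj E (by linarith) ⟨R1 E g, hR1mem E g⟩
    have heq : (⟨R1 E g, hDS (hR1mem E g)⟩ : Sdom) = ⟨R2 E h, hDS (hR2mem E h)⟩ :=
      Subtype.ext hh.symm
    rw [heq]
    have hM2inv : (M2⁻¹)⁻¹ = M2 := inv_inv M2
    rw [hM2inv]
    calc ‖S ⟨R2 E h, hDS (hR2mem E h)⟩‖ ≤ K * ‖h‖ := hS h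
      _ ≤ K * (M2 * ‖g‖) := by
          have := hb2 E hE g h hh
          exact mul_le_mul_of_nonneg_left this hK
      _ = M2 * K * ‖g‖ := by ring
end
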